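/- arXiv:1607.06865 — 6 statements merged into one kernel-verified Lean document; each statement's English description precedes it below -/
import Mathlib

section
/- Let T be a tree in which every leaf is a terminal (member of a set U of vertices of T) and every internal vertex has degree at least 3. Then for any integer s ≥ 3, the number of vertices of T with degree at least s is at most floor((|U|-2)/(s-2)). -/
/-!
In a tree the degree excesses `deg v - 2` sum to `-2`. Leaves contribute `-1` each, so the
vertices of degree at least `2` have total excess `#leaves - 2`; as these excesses are
nonnegative, the vertices of degree at least `s` contribute at least `s - 2` each to it.
-/

open Finset

namespace SimpleGraph

variable {V : Type*} [Fintype V] {G : SimpleGraph V} [DecidableRel G.Adj]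

theorem IsTree.sum_degree_sub_two (hG : G.IsTree) : ∑ v, ((G.degree v : ℤ) - 2) = -2 := by
  have hsum : ∑ v, (G.degree v : ℤ) = 2 * #G.edgeFinset := by
    exact_mod_cast G.sum_degrees_eq_twice_card_edges
  have hcard : (#G.edgeFinset : ℤ) + 1 = Fintype.card V := by exact_mod_cast hG.card_edgeFinset
  rw [sum_sub_distrib, hsum, sum_const, card_univ, nsmul_eq_mul, ← hcard]
  ring

theorem IsTree.sum_degree_sub_two_of_two_le [Nontrivial V] (hG : G.IsTree) :
    ∑ v with 2 ≤ G.degree v, ((G.degree v : ℤ) - 2) = #{v | G.degree v = 1} - 2 := by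
  have hleaves : ∑ v with G.degree v = 1, ((G.degree v : ℤ) - 2) = -#{v | G.degree v = 1} := by
    rw [sum_congr rfl fun v hv => by rw [(mem_filter.mp hv).2]]
    simp
  have hsplit := sum_filter_add_sum_filter_not univ (fun v => G.degree v = 1)
    (fun v => (G.degree v : ℤ) - 2)
  have hinternal : univ.filter (fun v => ¬G.degree v = 1) = univ.filter (2 ≤ G.degree ·) :=
    filter_congr fun v _ => by
      have := hG.connected.preconnected.degree_pos_of_nontrivial v
      omega
  rw [hleaves, hinternal, hG.sum_degree_sub_two] at hsplit
  linarith

theorem IsTree.card_le_degree_mul_sub_two_le (hG : G.IsTree) (s : ℕ) :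
    #{v | s ≤ G.degree v} * (s - 2) ≤ #{v | G.degree v = 1} - 2 := by
  rcases le_or_gt s 2 with hs | hs
  · simp [Nat.sub_eq_zero_of_le hs]
  rcases (univ.filter (s ≤ G.degree ·)).eq_empty_or_nonempty with hB | ⟨v, hv⟩
  · simp [hB]
  have : Nontrivial V := by
    obtain ⟨w, hw⟩ := (G.degree_pos_iff_exists_adj v).mp (by have := (mem_filter.mp hv).2; omega)
    exact ⟨v, w, G.ne_of_adj hw⟩
  have key : (#{v | s ≤ G.degree v} : ℤ) * (s - 2) ≤ #{v | G.degree v = 1} - 2 :=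
    calc (#{v | s ≤ G.degree v} : ℤ) * (s - 2)
        = ∑ v with s ≤ G.degree v, ((s : ℤ) - 2) := by rw [sum_const, nsmul_eq_mul]
      _ ≤ ∑ v with s ≤ G.degree v, ((G.degree v : ℤ) - 2) :=
        sum_le_sum fun v hv => by have := (mem_filter.mp hv).2; omega
      _ ≤ ∑ v with 2 ≤ G.degree v, ((G.degree v : ℤ) - 2) :=
        sum_le_sum_of_subset_of_nonneg (monotone_filter_right _ fun v hv => by omega)
          fun v hv _ => by have := (mem_filter.mp hv).2; omega
      _ = #{v | G.degree v = 1} - 2 := hG.sum_degree_sub_two_of_two_le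
  have hcast : ((s - 2 : ℕ) : ℤ) = s - 2 := by omega
  rw [← hcast, ← Nat.cast_mul] at key
  generalize #{v | s ≤ G.degree v} * (s - 2) = k at key ⊢
  omega

end SimpleGraph

theorem stmt1_general {V : Type*} [Fintype V] (G : SimpleGraph V) [DecidableRel G.Adj]
    (hT : G.IsTree) (U : Finset V)
    (hleaf : ∀ v : V, G.degree v = 1 → v ∈ U)
    (s : ℕ) (hs : 3 ≤ s) :
    (Finset.univ.filter (fun v : V => s ≤ G.degree v)).card ≤ (U.card - 2) / (s - 2) := by
  rw [Nat.le_div_iff_mul_le (by omega)]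
  have hleaves : #{v | G.degree v = 1} ≤ #U :=
    card_le_card fun v hv => hleaf v (mem_filter.mp hv).2
  exact (hT.card_le_degree_mul_sub_two_le s).trans (Nat.sub_le_sub_right hleaves 2)

/-- Let `T` be a tree in which every leaf is a terminal (member of `U`) and every
internal vertex has degree at least 3.  Then for any integer `s ≥ 3`, the number of
vertices of `T` with degree at least `s` is at most `⌊(|U|-2)/(s-2)⌋`. -/
theorem stmt1 {V : Type*} [Fintype V] (G : SimpleGraph V) [DecidableRel G.Adj]
    (hT : G.IsTree) (U : Finset V)
    (hleaf : ∀ v : V, G.degree v = 1 → v ∈ U)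
    (hinternal : ∀ v : V, 2 ≤ G.degree v → 3 ≤ G.degree v)
    (s : ℕ) (hs : 3 ≤ s) (hU : 2 ≤ U.card) :
    (Finset.univ.filter (fun v : V => s ≤ G.degree v)).card ≤ (U.card - 2) / (s - 2) :=
  stmt1_general G hT U hleaf s hs
end

section
/- Let T be a tree in which every leaf is a terminal and every internal vertex has degree at least 3. Then for any integer s ≥ 3, the number of terminal vertices (members of U) having degree at least s in T is at most floor((|U|-2)/(s-1)). -/
/-!
In a tree the degrees sum to `2n - 2`, i.e. `∑ (deg v - 2) = -2`, so the number of leaves is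
`2 + ∑_{deg v ≥ 2} (deg v - 2) ≥ 2 + (s - 2) a`, where `a` counts the vertices of degree `≥ s`.
For the set `A` of terminals of degree `≥ s` this gives `2 + (s - 2)|A| ≤ #leaves ≤ |U| - |A|`,
since the leaves and `A` are disjoint subsets of `U`.
-/

open Finset

namespace SimpleGraph

variable {V : Type*} [Fintype V] {G : SimpleGraph V} [DecidableRel G.Adj]

lemma IsTree.sum_degrees_add_two (hT : G.IsTree) : ∑ v, G.degree v + 2 = 2 * Fintype.card V := by
  rw [sum_degrees_eq_twice_card_edges, ← hT.card_edgeFinset]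
  ring

lemma IsTree.sub_two_mul_card_add_two_le_card_degree_eq_one [Nontrivial V] (hT : G.IsTree)
    {s : ℕ} (hs : 2 ≤ s) :
    (s - 2) * #{v | s ≤ G.degree v} + 2 ≤ #{v | G.degree v = 1} := by
  have hsum : ∑ v, ((G.degree v : ℤ) - 2) = -2 := by
    have := hT.sum_degrees_add_two
    simp only [sum_sub_distrib, sum_const, card_univ, nsmul_eq_mul]
    have hcast : ((∑ v, G.degree v : ℕ) : ℤ) + 2 = 2 * Fintype.card V := by exact_mod_cast this
    push_cast at hcast
    linarith
  have hpointwise (v : V) : ((s : ℤ) - 2) * (if s ≤ G.degree v then 1 else 0)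
      - (if G.degree v = 1 then 1 else 0) ≤ (G.degree v : ℤ) - 2 := by
    have := hT.preconnected.degree_pos_of_nontrivial v
    split_ifs <;> omega
  have := sum_le_sum fun v (_ : v ∈ univ) => hpointwise v
  simp only [sum_sub_distrib, ← mul_sum, sum_boole, hsum] at this
  rw [← Nat.cast_le (α := ℤ)]
  simp only [Nat.cast_add, Nat.cast_mul, Nat.cast_sub hs, Nat.cast_ofNat]
  linarith

end SimpleGraph

theorem stmt2_general {V : Type*} [Fintype V] [DecidableEq V] (G : SimpleGraph V) [DecidableRel G.Adj]
    (hT : G.IsTree) (U : Finset V)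
    (hleaf : ∀ v : V, G.degree v = 1 → v ∈ U)
    (s : ℕ) (hs : 3 ≤ s) :
    (U.filter (fun v : V => s ≤ G.degree v)).card ≤ (U.card - 2) / (s - 1) := by
  set A := U.filter (fun v : V => s ≤ G.degree v)
  rcases A.eq_empty_or_nonempty with hA | ⟨v, hv⟩
  · simp [hA]
  obtain ⟨w, hvw⟩ := (G.degree_pos_iff_exists_adj v).mp (by grind)
  have : Nontrivial V := nontrivial_of_ne v w hvw.ne
  have hleaves := hT.sub_two_mul_card_add_two_le_card_degree_eq_one (s := s) (by omega)
  have hA_le : (s - 2) * #A ≤ (s - 2) * #{v | s ≤ G.degree v} :=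
    Nat.mul_le_mul_left _ (card_le_card (filter_subset_filter _ (subset_univ U)))
  have hdisj : Disjoint ({v | G.degree v = 1} : Finset V) A :=
    disjoint_left.mpr fun u hu hu' => by grind
  have hU : #{v | G.degree v = 1} + #A ≤ #U := by
    rw [← card_union_of_disjoint hdisj]
    exact card_le_card <|
      union_subset (fun v hv => hleaf v (mem_filter.mp hv).2) (filter_subset _ U)
  rw [Nat.le_div_iff_mul_le (by omega)]
  obtain ⟨t, rfl⟩ : ∃ t, s = t + 2 := ⟨s - 2, by omega⟩
  rw [Nat.add_sub_cancel] at hA_le hleaves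
  rw [show t + 2 - 1 = t + 1 by omega, mul_add_one, mul_comm]
  omega

/-- Let `T` be a tree in which every leaf is a terminal and every internal vertex has
degree at least 3.  Then for any integer `s ≥ 3`, the number of terminal vertices
(members of `U`) having degree at least `s` in `T` is at most `⌊(|U|-2)/(s-1)⌋`. -/
theorem stmt2 {V : Type*} [Fintype V] [DecidableEq V] (G : SimpleGraph V) [DecidableRel G.Adj]
    (hT : G.IsTree) (U : Finset V)
    (hleaf : ∀ v : V, G.degree v = 1 → v ∈ U)
    (hinternal : ∀ v : V, 2 ≤ G.degree v → 3 ≤ G.degree v)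
    (s : ℕ) (hs : 3 ≤ s) (hU : 2 ≤ U.card) :
    (U.filter (fun v : V => s ≤ G.degree v)).card ≤ (U.card - 2) / (s - 1) :=
  stmt2_general G hT U hleaf s hs
end

section
/- Let L = (v_1, ..., v_r) be a list of distinct vertices, d ≥ 1 an integer, and Λ_d(L) the graph on {v_1,...,v_r} with edges {v_i, v_j} whenever |i - j| ≤ d+1. If D is any set of at most d vertices, then the subgraph of Λ_d(L) induced on the undeleted vertices {v_1,...,v_r} \ D is connected (provided it is nonempty). -/
/-! Deleting at most `d` positions leaves one in every window of `d + 1` consecutive positions,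
so from any surviving position one can jump forward, by at most `d + 1`, to a surviving position
that is closer to the target. -/

/-- The `d`-adjacency graph on list positions `0, …, r-1`: positions at distance at
most `d+1` are adjacent. -/
def adjGraph (r d : ℕ) : SimpleGraph (Fin r) where
  Adj i j := i ≠ j ∧ Nat.dist i.val j.val ≤ d + 1
  symm := ⟨fun i j h => ⟨h.1.symm, by rw [Nat.dist_comm]; exact h.2⟩⟩
  loopless := ⟨fun i h => h.1 rfl⟩

lemma adjGraph_adj_of_lt {r d : ℕ} {i j : Fin r} (hij : i < j) (hji : j.val ≤ i.val + d + 1) :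
    (adjGraph r d).Adj i j :=
  ⟨hij.ne, by rw [Nat.dist_eq_sub_of_le hij.le]; omega⟩

lemma exists_notMem_Ioc_of_card_le {r d : ℕ} {D : Finset (Fin r)} (hD : D.card ≤ d)
    (i : Fin r) (hi : i.val + d + 1 < r) :
    ∃ k : Fin r, k ∉ D ∧ i < k ∧ k.val ≤ i.val + d + 1 := by
  have hlt : ∀ m ∈ Finset.Ioc i.val (i.val + d + 1), m < r := fun m hm => by
    rw [Finset.mem_Ioc] at hm; omega
  set S : Finset (Fin r) := (Finset.Ioc i.val (i.val + d + 1)).attachFin hlt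
  have hS : S.card = d + 1 := by
    rw [Finset.card_attachFin, Nat.card_Ioc]; omega
  obtain ⟨k, hkS, hkD⟩ := Finset.not_subset.mp fun h : S ⊆ D => by
    have := Finset.card_le_card h; omega
  rw [Finset.mem_attachFin, Finset.mem_Ioc] at hkS
  exact ⟨k, hkD, Fin.lt_def.mpr hkS.1, hkS.2⟩

lemma adjGraph_induce_reachable_of_le {r d : ℕ} {D : Finset (Fin r)} (hD : D.card ≤ d)
    {i j : Fin r} (hi : i ∉ D) (hj : j ∉ D) (hij : i ≤ j) :
    ((adjGraph r d).induce {v | v ∉ D}).Reachable ⟨i, hi⟩ ⟨j, hj⟩ := by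
  induction hn : j.val - i.val using Nat.strong_induction_on generalizing i with
  | _ n ih =>
    rcases hij.eq_or_lt with rfl | hlt
    · rfl
    by_cases hclose : j.val ≤ i.val + d + 1
    · exact SimpleGraph.Adj.reachable (adjGraph_adj_of_lt hlt hclose)
    obtain ⟨k, hk, hik, hki⟩ := exists_notMem_Ioc_of_card_le hD i (by omega)
    have hstep : ((adjGraph r d).induce {v | v ∉ D}).Adj ⟨i, hi⟩ ⟨k, hk⟩ :=
      adjGraph_adj_of_lt hik hki
    exact hstep.reachable.trans
      (ih (j.val - k.val) (by rw [Fin.lt_def] at hik; omega) hk (by rw [Fin.le_def]; omega) rfl)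

theorem stmt4_general (r d : ℕ) (D : Finset (Fin r)) (hD : D.card ≤ d)
    (hne : ∃ v : Fin r, v ∉ D) :
    ((adjGraph r d).induce {v : Fin r | v ∉ D}).Connected := by
  obtain ⟨v, hv⟩ := hne
  refine (SimpleGraph.connected_iff _).mpr ⟨?_, ⟨⟨v, hv⟩⟩⟩
  rintro ⟨a, ha⟩ ⟨b, hb⟩
  rcases le_total a b with hab | hba
  · exact adjGraph_induce_reachable_of_le hD ha hb hab
  · exact (adjGraph_induce_reachable_of_le hD hb ha hba).symm

/-- If a set `D` of at most `d` vertices is deleted from the `d`-adjacency graph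
`Λ_d(L)` of a list of `r` distinct vertices, then the subgraph induced on the
remaining (undeleted) vertices is connected, provided it is nonempty. -/
theorem stmt4 (r d : ℕ) (hd : 1 ≤ d) (D : Finset (Fin r)) (hD : D.card ≤ d)
    (hne : ∃ v : Fin r, v ∉ D) :
    ((adjGraph r d).induce {v : Fin r | v ∉ D}).Connected :=
  stmt4_general r d D hD hne
end

section
/- Let T be a tree and Euler(T) the sequence of vertices of T listed by first appearance in an Euler tour of T. Removing f edges from T splits Euler(T) into at most 2f+1 maximal contiguous intervals such that the vertex set of each connected subtree of T minus the removed edges is a union of some of these intervals. -/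
/-!
Deleting edges never merges components, so consecutive vertices of the closed walk can lie in
different components of `G \ F` only across an edge of `F`; since the walk traverses each such
edge twice, there are at most `2 * #F` such steps. Keeping only first occurrences passes to a
sublist, and because "lying in the same component" is transitive, dropping an entry from a list
never increases the number of component changes between consecutive entries.
-/

namespace List

variable {α : Type*}

open scoped Classical in
noncomputable def chainBreaks (R : α → α → Prop) : List α → ℕ
  | [] => 0
  | [_] => 0
  | a :: b :: l => (if R a b then 0 else 1) + chainBreaks R (b :: l)

variable {R : α → α → Prop}

open scoped Classical in
theorem chainBreaks_cons_cons (a b : α) (l : List α) :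
    chainBreaks R (a :: b :: l) = (if R a b then 0 else 1) + chainBreaks R (b :: l) := rfl

theorem chainBreaks_le_cons (a : α) (l : List α) : chainBreaks R l ≤ chainBreaks R (a :: l) := by
  cases l with
  | nil => exact le_rfl
  | cons b l => exact Nat.le_add_left _ _

theorem chainBreaks_cons_le_cons_cons [IsTrans α R] (x a : α) (l : List α) :
    chainBreaks R (x :: l) ≤ chainBreaks R (x :: a :: l) := by
  cases l with
  | nil => exact Nat.zero_le _
  | cons b l =>
    simp only [chainBreaks_cons_cons]
    by_cases hxb : R x b
    · rw [if_pos hxb]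
      omega
    · rw [if_neg hxb]
      by_cases hxa : R x a
      · rw [if_pos hxa, if_neg fun hab => hxb (_root_.trans hxa hab)]
        omega
      · rw [if_neg hxa]
        omega

theorem Sublist.chainBreaks_cons_le [IsTrans α R] {l₁ l₂ : List α} (h : l₁ <+ l₂)
    (x : α) : chainBreaks R (x :: l₁) ≤ chainBreaks R (x :: l₂) := by
  induction h generalizing x with
  | slnil => exact le_rfl
  | cons a _ ih => exact (ih x).trans (chainBreaks_cons_le_cons_cons x a _)
  | cons_cons a _ ih =>
    simp only [chainBreaks_cons_cons]
    exact Nat.add_le_add_left (ih a) _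

theorem Sublist.chainBreaks_le [IsTrans α R] {l₁ l₂ : List α} (h : l₁ <+ l₂) :
    chainBreaks R l₁ ≤ chainBreaks R l₂ := by
  induction h with
  | slnil => exact le_rfl
  | cons a _ ih => exact ih.trans (chainBreaks_le_cons a _)
  | cons_cons a h _ => exact h.chainBreaks_cons_le a

theorem ncard_setOf_not_getD_eq_chainBreaks (d : α) (l : List α) :
    {i : ℕ | i + 1 < l.length ∧ ¬ R (l.getD i d) (l.getD (i + 1) d)}.ncard =
      chainBreaks R l := by
  classical
  suffices key : ∀ l : List α, ∑ i ∈ Finset.range (l.length - 1),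
      (if ¬ R (l.getD i d) (l.getD (i + 1) d) then 1 else 0) = chainBreaks R l by
    rw [← key, ← Finset.card_filter, ← Set.ncard_coe_finset]
    congr 1
    ext i
    simp [Nat.lt_sub_iff_add_lt]
  intro l
  induction l with
  | nil => rfl
  | cons a l ih =>
    cases l with
    | nil => rfl
    | cons b l =>
      simp only [length_cons, Nat.add_sub_cancel] at ih ⊢
      rw [Finset.sum_range_succ', chainBreaks_cons_cons, ← ih]
      simp only [getD_cons_succ, getD_cons_zero]
      split_ifs <;> omega

theorem countP_mem_eq_sum_count [DecidableEq α] (F : Finset α) (l : List α) :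
    l.countP (· ∈ F) = ∑ e ∈ F, l.count e := by
  rw [← Finset.sum_filter_count_eq_countP]
  refine Finset.sum_subset (fun e he => (Finset.mem_filter.1 he).2) fun e _ he => ?_
  exact count_eq_zero.2 fun hl => he (Finset.mem_filter.2 ⟨mem_toFinset.2 hl, ‹_›⟩)

end List

namespace SimpleGraph.Walk

variable {V : Type*} [DecidableEq V] {G : SimpleGraph V}

theorem chainBreaks_support_le_countP_edges (F : Finset (Sym2 V)) {u v : V} (p : G.Walk u v) :
    p.support.chainBreaks (G.deleteEdges ↑F).Reachable ≤ p.edges.countP (· ∈ F) := by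
  induction p with
  | nil => exact Nat.zero_le _
  | @cons u v w h p ih =>
    rw [support_cons, edges_cons, List.countP_cons, ← p.cons_tail_support,
      List.chainBreaks_cons_cons, p.cons_tail_support]
    by_cases hF : s(u, v) ∈ F
    · simp only [hF, decide_true, if_true]
      split_ifs <;> omega
    · have huv : (G.deleteEdges ↑F).Reachable u v :=
        Adj.reachable (deleteEdges_adj.2 ⟨h, by simpa using hF⟩)
      simp only [hF, huv, decide_false, if_true]
      omega

end SimpleGraph.Walk

theorem stmt7_general {V : Type*} [DecidableEq V] (G : SimpleGraph V)
    (r : V) (w : G.Walk r r)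
    (hEuler : ∀ e ∈ G.edgeSet, w.edges.count e = 2)
    (F : Finset (Sym2 V)) (hF : ↑F ⊆ G.edgeSet) (f : ℕ) (hf : F.card = f) :
    {i : ℕ | i + 1 < w.support.dedup.length ∧
        ¬ (G.deleteEdges ↑F).Reachable (w.support.dedup.getD i r)
            (w.support.dedup.getD (i + 1) r)}.ncard ≤ 2 * f := by
  have : IsTrans V (G.deleteEdges ↑F).Reachable := ⟨fun _ _ _ => SimpleGraph.Reachable.trans⟩
  have hcount : w.edges.countP (· ∈ F) = 2 * f := by
    rw [List.countP_mem_eq_sum_count, Finset.sum_congr rfl fun e he => hEuler e (hF he),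
      Finset.sum_const, smul_eq_mul, hf, mul_comm]
  calc _ = w.support.dedup.chainBreaks (G.deleteEdges ↑F).Reachable :=
        List.ncard_setOf_not_getD_eq_chainBreaks r _
    _ ≤ w.support.chainBreaks (G.deleteEdges ↑F).Reachable :=
        (List.dedup_sublist _).chainBreaks_le
    _ ≤ w.edges.countP (· ∈ F) := w.chainBreaks_support_le_countP_edges F
    _ = 2 * f := hcount

/-- Let `T` be a tree and `Euler(T)` the sequence of vertices of `T` listed by first
appearance in an Euler tour (a closed walk using every edge exactly twice).  Removing
`f` edges from `T` splits `Euler(T)` into at most `2f+1` maximal contiguous intervals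
such that the vertex set of each connected subtree of `T` minus the removed edges is a
union of some of these intervals: equivalently, the number of positions at which the
connected component changes between consecutive entries of `Euler(T)` is at most `2f`. -/
theorem stmt7 {V : Type*} [Fintype V] [DecidableEq V] (G : SimpleGraph V)
    (hT : G.IsTree) (r : V) (w : G.Walk r r)
    (hEuler : ∀ e ∈ G.edgeSet, w.edges.count e = 2)
    (F : Finset (Sym2 V)) (hF : ↑F ⊆ G.edgeSet) (f : ℕ) (hf : F.card = f) :
    {i : ℕ | i + 1 < w.support.dedup.length ∧
        ¬ (G.deleteEdges ↑F).Reachable (w.support.dedup.getD i r)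
            (w.support.dedup.getD (i + 1) r)}.ncard ≤ 2 * f :=
  stmt7_general G r w hEuler F hF f hf
end

section
/- Let E' be a nonempty finite set of edges, and suppose each edge is independently included in a random subset E_i with probability 2^{-i}, where i = floor(log₂ |E'|). Then the probability that exactly one edge of E' lies in E_i is at least a positive absolute constant (in fact at least 1/(2e)). -/
/-!
With `m = 2 ^ ⌊log₂ N⌋` we have `m ≤ N ≤ 2m - 1`, and the quantity is `f(N) = (N / m) (1 - 1/m)^(N-1)`.
On this range `f` is smallest at `N = 2m - 1`: with `j = 2m - 1 - N`, Bernoulli's inequality gives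
`(1 - 1/m)^j (1 + j/m) ≤ 1`, while `N (1 + j/m) ≥ 2m - 1` because `(N - m) j ≥ 0`. Finally
`f(2m - 1) ≥ (3/2) ((1 - 1/m)^(m-1))^2 ≥ (3/2) e⁻²`, which is at least `1/(2e)` since `e ≤ 3`.
-/

open Real

lemma exp_neg_one_le_one_sub_inv_pow_pred (m : ℕ) : exp (-1) ≤ (1 - 1 / (m : ℝ)) ^ (m - 1) := by
  rcases Nat.lt_or_ge m 2 with hm | hm
  · have : m - 1 = 0 := by omega
    rw [this, pow_zero]
    exact exp_le_one_iff.2 (by norm_num)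
  obtain ⟨n, rfl⟩ : ∃ n, m = n + 1 := ⟨m - 1, by omega⟩
  have hn : (n : ℝ) ≠ 0 := by norm_cast; omega
  have hbase : 1 - 1 / ((n + 1 : ℕ) : ℝ) = (1 + (n : ℝ)⁻¹)⁻¹ := by
    push_cast
    field_simp
    ring
  rw [hbase, Nat.add_sub_cancel, inv_pow, exp_neg]
  exact inv_anti₀ (by positivity) one_add_inv_pow_le_exp

lemma one_sub_pow_mul_one_add_nat_mul_le_one {a : ℝ} (ha₀ : -1 ≤ a) (ha₁ : a ≤ 1) (j : ℕ) :
    (1 - a) ^ j * (1 + j * a) ≤ 1 :=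
  calc (1 - a) ^ j * (1 + j * a) ≤ (1 - a) ^ j * (1 + a) ^ j :=
        mul_le_mul_of_nonneg_left (one_add_mul_le_pow (by linarith) j) (pow_nonneg (by linarith) j)
    _ = (1 - a ^ 2) ^ j := by rw [← mul_pow]; ring
    _ ≤ 1 := pow_le_one₀ (by nlinarith) (by nlinarith)

lemma two_mul_sub_one_mul_one_sub_inv_pow_le {m N : ℕ} (hmN : m ≤ N) (hNm : N < 2 * m) :
    (2 * m - 1 : ℝ) * (1 - 1 / (m : ℝ)) ^ (2 * m - 2) ≤ N * (1 - 1 / (m : ℝ)) ^ (N - 1) := by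
  set q : ℝ := 1 - 1 / (m : ℝ)
  set j := 2 * m - 1 - N with hj
  have hm : (1 : ℝ) ≤ m := by norm_cast; omega
  have hinv₀ : 0 ≤ 1 / (m : ℝ) := by positivity
  have hinv₁ : 1 / (m : ℝ) ≤ 1 := by rw [div_le_one (by linarith)]; exact hm
  have hjR : (j : ℝ) = 2 * m - 1 - N := by
    rw [hj, Nat.cast_sub (by omega), Nat.cast_sub (by omega)]
    push_cast
    ring
  have hquad : (2 * m - 1 : ℝ) ≤ N * (1 + j * (1 / m)) := by
    have hNm' : (m : ℝ) ≤ N := by exact_mod_cast hmN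
    have hj₀ : (0 : ℝ) ≤ j := j.cast_nonneg
    rw [hjR] at hj₀ ⊢
    rw [mul_one_div, ← sub_nonneg]
    have key : (N : ℝ) * (1 + (2 * m - 1 - N) / m) - (2 * m - 1) = (N - m) * (2 * m - 1 - N) / m := by
      field_simp
      ring
    rw [key]
    exact div_nonneg (mul_nonneg (by linarith) hj₀) (by linarith)
  have hqj : (2 * m - 1 : ℝ) * q ^ j ≤ N :=
    calc (2 * m - 1 : ℝ) * q ^ j ≤ N * (1 + j * (1 / m)) * q ^ j :=
          mul_le_mul_of_nonneg_right hquad (pow_nonneg (by linarith) j)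
      _ = N * (q ^ j * (1 + j * (1 / m))) := by ring
      _ ≤ N * 1 := mul_le_mul_of_nonneg_left
          (one_sub_pow_mul_one_add_nat_mul_le_one (by linarith) hinv₁ j) N.cast_nonneg
      _ = N := mul_one _
  calc (2 * m - 1 : ℝ) * q ^ (2 * m - 2) = (2 * m - 1 : ℝ) * q ^ j * q ^ (N - 1) := by
        rw [mul_assoc, ← pow_add]
        congr 2
        omega
    _ ≤ N * q ^ (N - 1) := mul_le_mul_of_nonneg_right hqj (pow_nonneg (by linarith) _)

lemma inv_two_mul_exp_one_le_two_mul_sub_one_div_mul_one_sub_inv_pow {m : ℕ} (hm : 2 ≤ m) :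
    1 / (2 * exp 1) ≤ (2 * m - 1 : ℝ) / m * (1 - 1 / (m : ℝ)) ^ (2 * m - 2) := by
  have hmR : (2 : ℝ) ≤ m := by exact_mod_cast hm
  have hratio : (3 / 2 : ℝ) ≤ (2 * m - 1) / m := by
    rw [le_div_iff₀ (by linarith)]
    linarith
  have hpow : exp (-1) ^ 2 ≤ (1 - 1 / (m : ℝ)) ^ (2 * m - 2) := by
    rw [show 2 * m - 2 = (m - 1) * 2 by omega, pow_mul]
    exact pow_le_pow_left₀ (exp_pos _).le (exp_neg_one_le_one_sub_inv_pow_pred m) 2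
  have he : 1 / (2 * exp 1) ≤ 3 / 2 * exp (-1) ^ 2 := by
    rw [exp_neg, div_le_iff₀ (by positivity)]
    have : 3 / 2 * (exp 1)⁻¹ ^ 2 * (2 * exp 1) = 3 / exp 1 := by
      field_simp
    rw [this, le_div_iff₀ (exp_pos 1), one_mul]
    exact exp_one_lt_three.le
  calc 1 / (2 * exp 1) ≤ 3 / 2 * exp (-1) ^ 2 := he
    _ ≤ (2 * m - 1 : ℝ) / m * (1 - 1 / (m : ℝ)) ^ (2 * m - 2) :=
        mul_le_mul hratio hpow (by positivity) (by linarith)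

lemma inv_two_mul_exp_one_le_mul_one_sub_inv_pow {m N : ℕ} (hmN : m ≤ N) (hNm : N < 2 * m) :
    1 / (2 * exp 1) ≤ N * (1 / (m : ℝ)) * (1 - 1 / (m : ℝ)) ^ (N - 1) := by
  rcases Nat.lt_or_ge m 2 with hm | hm
  · obtain ⟨rfl, rfl⟩ : m = 1 ∧ N = 1 := by omega
    rw [Nat.sub_self, pow_zero, Nat.cast_one, div_one, mul_one, mul_one, one_div]
    exact inv_le_one_of_one_le₀ (by linarith [exp_one_gt_two])
  calc 1 / (2 * exp 1) ≤ (2 * m - 1 : ℝ) / m * (1 - 1 / (m : ℝ)) ^ (2 * m - 2) :=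
        inv_two_mul_exp_one_le_two_mul_sub_one_div_mul_one_sub_inv_pow hm
    _ = 1 / (m : ℝ) * ((2 * m - 1 : ℝ) * (1 - 1 / (m : ℝ)) ^ (2 * m - 2)) := by ring
    _ ≤ 1 / (m : ℝ) * (N * (1 - 1 / (m : ℝ)) ^ (N - 1)) :=
        mul_le_mul_of_nonneg_left (two_mul_sub_one_mul_one_sub_inv_pow_le hmN hNm) (by positivity)
    _ = N * (1 / (m : ℝ)) * (1 - 1 / (m : ℝ)) ^ (N - 1) := by ring

/-- Let `E'` be a nonempty finite set of `N` edges, and suppose each edge is included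
in a random subset `E_i` independently with probability `2^{-i}` where
`i = ⌊log₂ N⌋`.  Then `Pr[|E' ∩ E_i| = 1] = N · 2^{-i} · (1 - 2^{-i})^{N-1}` is at
least the positive absolute constant `1/(2e)`. -/
theorem stmt10 (N : ℕ) (hN : 1 ≤ N) :
    1 / (2 * Real.exp 1) ≤
      (N : ℝ) * (1 / 2 ^ Nat.log 2 N) * (1 - 1 / 2 ^ Nat.log 2 N) ^ (N - 1) := by
  have hlow : 2 ^ Nat.log 2 N ≤ N := Nat.pow_log_le_self 2 (by omega)
  have hhigh : N < 2 * 2 ^ Nat.log 2 N := by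
    simpa [pow_succ, mul_comm] using Nat.lt_pow_succ_log_self (b := 2) (by norm_num) N
  simpa using inv_two_mul_exp_one_le_mul_one_sub_inv_pow hlow hhigh
end

section
/- If {u,v} is an edge of G with u ∈ V(γ) and v ∈ V(γ') for components γ ∈ C_i and γ' ∈ C_{i'} of the hierarchy, then γ and γ' are related by the ancestor relation: V(γ) ⊆ V(γ') or V(γ') ⊆ V(γ) (w.l.o.g. taking i ≤ i', V(γ) ⊆ V(γ'')). Equivalently, no graph edge joins two unrelated components of the hierarchy. -/
/-!
The vertex set of level `i` grows with `i`, so a component `γ` of a lower level lies inside a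
connected subgraph of the higher level; an edge from `γ` to a higher-level component `γ'` then
forces that connected subgraph, and hence `γ`, into `γ'`.
-/

namespace SimpleGraph

variable {V W : Type*} {G : SimpleGraph V} {G' : SimpleGraph W}

lemma ConnectedComponent.image_supp_subset_supp_map (φ : G →g G') (c : G.ConnectedComponent) :
    φ '' c.supp ⊆ (c.map φ).supp := by
  rintro _ ⟨x, rfl, rfl⟩
  rfl

lemma ConnectedComponent.map_induceHomOfLE_eq_of_adj {s t : Set V} (hst : s ⊆ t)
    {c : (G.induce s).ConnectedComponent} {c' : (G.induce t).ConnectedComponent} {u v : V}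
    (huv : G.Adj u v) (hu : u ∈ Subtype.val '' c.supp) (hv : v ∈ Subtype.val '' c'.supp) :
    c.map (G.induceHomOfLE hst).toHom = c' := by
  obtain ⟨u, rfl, rfl⟩ := hu
  obtain ⟨v, rfl, rfl⟩ := hv
  exact ConnectedComponent.connectedComponentMk_eq_of_adj huv

lemma ConnectedComponent.image_val_supp_subset_of_adj {s t : Set V} (hst : s ⊆ t)
    {c : (G.induce s).ConnectedComponent} {c' : (G.induce t).ConnectedComponent} {u v : V}
    (huv : G.Adj u v) (hu : u ∈ Subtype.val '' c.supp) (hv : v ∈ Subtype.val '' c'.supp) :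
    Subtype.val '' c.supp ⊆ Subtype.val '' c'.supp :=
  calc Subtype.val '' c.supp
      = Subtype.val '' (Set.inclusion hst '' c.supp) := by rw [Set.image_image]
    _ ⊆ Subtype.val '' (c.map (G.induceHomOfLE hst).toHom).supp :=
      Set.image_mono (image_supp_subset_supp_map (G.induceHomOfLE hst).toHom c)
    _ = Subtype.val '' c'.supp := by rw [map_induceHomOfLE_eq_of_adj hst huv hu hv]

end SimpleGraph

lemma monotone_setOf_forall_Ico_notMem {V : Type*} (B : ℕ → Set V) (p : ℕ) :
    Monotone fun i => {x : V | ∀ j ∈ Set.Ico i p, x ∉ B j} :=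
  fun _ _ hii' _ hx j hj => hx j ⟨hii'.trans hj.1, hj.2⟩

/-- If `{u,v}` is an edge of `G` with `u ∈ V(γ)` and `v ∈ V(γ')` for components
`γ ∈ C_i` and `γ' ∈ C_{i'}` of the hierarchy, then `γ` and `γ'` are related by the
ancestor relation: `V(γ) ⊆ V(γ')` or `V(γ') ⊆ V(γ)`.  Equivalently, no graph edge
joins two unrelated components of the hierarchy. -/
theorem stmt18 {V : Type*} (G : SimpleGraph V) (B : ℕ → Set V) (p i i' : ℕ)
    (u v : V) (huv : G.Adj u v)
    (c : (G.induce {x : V | ∀ j ∈ Set.Ico i p, x ∉ B j}).ConnectedComponent)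
    (c' : (G.induce {x : V | ∀ j ∈ Set.Ico i' p, x ∉ B j}).ConnectedComponent)
    (hu : u ∈ Subtype.val '' c.supp) (hv : v ∈ Subtype.val '' c'.supp) :
    Subtype.val '' c.supp ⊆ Subtype.val '' c'.supp ∨
    Subtype.val '' c'.supp ⊆ Subtype.val '' c.supp := by
  rcases le_total i i' with hii' | hi'i
  · exact .inl <| SimpleGraph.ConnectedComponent.image_val_supp_subset_of_adj
      (monotone_setOf_forall_Ico_notMem B p hii') huv hu hv
  · exact .inr <| SimpleGraph.ConnectedComponent.image_val_supp_subset_of_adj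
      (monotone_setOf_forall_Ico_notMem B p hi'i) huv.symm hv hu
end
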